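/- arXiv:2310.16488 — 3 statements merged into one kernel-verified Lean document; each statement's English description precedes it below -/
import Mathlib

section
/- Let $B\subset\mathbb{R}^d$ be a Borel set with finite Lebesgue measure, $\delta>0$, and let $m_\delta(B)$ be the minimal number of disjoint axis-parallel hypercubes of side $\delta$ whose closures cover $B$. Define $\ell_-(\delta)=\inf_{x,y\in[0,\delta]^d}\ell(|x-y|)$. Then for every finite $N$-point set $S\subset B$, $\xi_\ell(S)\ge N\,\ell_-(\delta)\,\big(\tfrac{N}{m_\delta(B)}-1\big)_+$, where $(t)_+=\max(t,0)$. -/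
open scoped ENNReal BigOperators Classical
open Filter MeasureTheory Set

noncomputable section

/-- The interaction energy of a finite point configuration. -/
def xi {d : ℕ} (ℓ : ℝ → ℝ≥0∞) (S : Finset (EuclideanSpace ℝ (Fin d))) : ℝ≥0∞ :=
  ∑ x ∈ S, ∑ y ∈ S, if x ≠ y then ℓ (dist x y) else 0

/-- The half-open hypercube of side `δ` "centered" at `c`. -/
def cube {d : ℕ} (c : EuclideanSpace ℝ (Fin d)) (δ : ℝ) : Set (EuclideanSpace ℝ (Fin d)) :=
  {x | ∀ i, c i - δ/2 ≤ x i ∧ x i < c i + δ/2}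

/-- The closed hypercube of side `δ` centered at `c` (closure of `cube c δ`). -/
def closedCube {d : ℕ} (c : EuclideanSpace ℝ (Fin d)) (δ : ℝ) : Set (EuclideanSpace ℝ (Fin d)) :=
  {x | ∀ i, c i - δ/2 ≤ x i ∧ x i ≤ c i + δ/2}

/-- `B` can be covered by the closures of `n` pairwise disjoint `δ`-hypercubes. -/
def Covers {d : ℕ} (δ : ℝ) (B : Set (EuclideanSpace ℝ (Fin d))) (n : ℕ) : Prop :=
  ∃ c : Fin n → EuclideanSpace ℝ (Fin d),
    (∀ j k, j ≠ k → Disjoint (cube (c j) δ) (cube (c k) δ)) ∧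
    B ⊆ ⋃ j, closedCube (c j) δ

/-- `mDelta δ B` : minimal number of disjoint `δ`-hypercubes whose closures cover `B`. -/
def mDelta {d : ℕ} (δ : ℝ) (B : Set (EuclideanSpace ℝ (Fin d))) : ℕ :=
  sInf {n | Covers δ B n}

/-- `ℓ₋(δ) = inf {ℓ(|x-y|) : x, y ∈ [0,δ]^d}`. -/
def ellMinus (d : ℕ) (ℓ : ℝ → ℝ≥0∞) (δ : ℝ) : ℝ≥0∞ :=
  ⨅ x ∈ {x : EuclideanSpace ℝ (Fin d) | ∀ i, x i ∈ Set.Icc 0 δ},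
    ⨅ y ∈ {y : EuclideanSpace ℝ (Fin d) | ∀ i, y i ∈ Set.Icc 0 δ}, ℓ (dist x y)

lemma ellMinus_le_of_mem_closedCube {d : ℕ} (ℓ : ℝ → ℝ≥0∞) (δ : ℝ)
    (c x y : EuclideanSpace ℝ (Fin d)) (hx : x ∈ closedCube c δ) (hy : y ∈ closedCube c δ) :
    ellMinus d ℓ δ ≤ ℓ (dist x y) := by
  set x' : EuclideanSpace ℝ (Fin d) := WithLp.toLp 2 (fun i => x i - c i + δ/2) with hx'def
  set y' : EuclideanSpace ℝ (Fin d) := WithLp.toLp 2 (fun i => y i - c i + δ/2) with hy'def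
  have hx' : x' ∈ {x : EuclideanSpace ℝ (Fin d) | ∀ i, x i ∈ Set.Icc 0 δ} := by
    intro i
    have h1 := (hx i).1; have h2 := (hx i).2
    constructor
    · show (0:ℝ) ≤ x i - c i + δ/2; linarith
    · show x i - c i + δ/2 ≤ δ; linarith
  have hy' : y' ∈ {y : EuclideanSpace ℝ (Fin d) | ∀ i, y i ∈ Set.Icc 0 δ} := by
    intro i
    have h1 := (hy i).1; have h2 := (hy i).2
    constructor
    · show (0:ℝ) ≤ y i - c i + δ/2; linarith
    · show y i - c i + δ/2 ≤ δ; linarith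
  have hdist : dist x' y' = dist x y := by
    rw [EuclideanSpace.dist_eq, EuclideanSpace.dist_eq]
    congr 1
    refine Finset.sum_congr rfl fun i _ => ?_
    have : x' i - y' i = x i - y i := by
      show (x i - c i + δ/2) - (y i - c i + δ/2) = x i - y i; ring
    rw [Real.dist_eq, Real.dist_eq, this]
  calc ellMinus d ℓ δ ≤ ⨅ y ∈ {y : EuclideanSpace ℝ (Fin d) | ∀ i, y i ∈ Set.Icc 0 δ},
        ℓ (dist x' y) := iInf₂_le x' hx'
    _ ≤ ℓ (dist x' y') := iInf₂_le y' hy'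
    _ = ℓ (dist x y) := by rw [hdist]

/-- Fundamental lower bound: for an `N`-point set `S ⊆ B` (with `B` Borel of finite
Lebesgue measure) and any `δ > 0`,
`ξ(S) ≥ N ℓ₋(δ) (N / m_δ(B) - 1)₊`. -/
theorem xi_fundamental_lower_bound {d : ℕ} (ℓ : ℝ → ℝ≥0∞)
    (hlsc : LowerSemicontinuous ℓ) (h0 : 0 < ℓ 0)
    (B : Set (EuclideanSpace ℝ (Fin d))) (hBmeas : MeasurableSet B)
    (hBvol : volume B ≠ ⊤) (δ : ℝ) (hδ : 0 < δ)
    (S : Finset (EuclideanSpace ℝ (Fin d))) (hS : ↑S ⊆ B) :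
    (S.card : ℝ≥0∞) * ellMinus d ℓ δ *
      ENNReal.ofReal ((S.card : ℝ) / (mDelta δ B : ℝ) - 1) ≤ xi ℓ S := by
  set m := mDelta δ B with hm
  set N := S.card with hN
  set L := ellMinus d ℓ δ with hL
  rcases Nat.eq_zero_or_pos m with hm0 | hmpos
  · rw [hm0]
    simp only [Nat.cast_zero, div_zero, zero_sub]
    rw [ENNReal.ofReal_of_nonpos (by norm_num), mul_zero]
    exact zero_le
  -- m > 0, so the covering set is nonempty and m realizes a cover
  have hmem : Covers δ B m := by
    have : {n | Covers δ B n}.Nonempty := by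
      by_contra h
      rw [Set.not_nonempty_iff_eq_empty] at h
      simp [hm, mDelta, h] at hmpos
    exact Nat.sInf_mem this
  obtain ⟨c, -, hcov⟩ := hmem
  have hex : ∀ x ∈ S, ∃ j, x ∈ closedCube (c j) δ := by
    intro x hx
    exact Set.mem_iUnion.mp (hcov (hS hx))
  set f : EuclideanSpace ℝ (Fin d) → Fin m :=
    fun x => if h : ∃ j, x ∈ closedCube (c j) δ then h.choose else ⟨0, hmpos⟩ with hf
  have hfS : ∀ x ∈ S, x ∈ closedCube (c (f x)) δ := by
    intro x hx
    have h := hex x hx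
    simp only [hf, dif_pos h]
    exact h.choose_spec
  set P : ℕ := ∑ x ∈ S, ∑ y ∈ S, if x ≠ y ∧ f x = f y then 1 else 0 with hP
  -- Step: xi ≥ P * L
  have hxi : (P : ℝ≥0∞) * L ≤ xi ℓ S := by
    have : (P : ℝ≥0∞) * L
        = ∑ x ∈ S, ∑ y ∈ S, if x ≠ y ∧ f x = f y then L else 0 := by
      rw [hP]
      push_cast
      rw [Finset.sum_mul]
      refine Finset.sum_congr rfl fun x _ => ?_
      rw [Finset.sum_mul]
      refine Finset.sum_congr rfl fun y _ => ?_
      split <;> simp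
    rw [this, xi]
    refine Finset.sum_le_sum fun x hx => Finset.sum_le_sum fun y hy => ?_
    by_cases h : x ≠ y ∧ f x = f y
    · rw [if_pos h, if_pos h.1]
      exact ellMinus_le_of_mem_closedCube ℓ δ (c (f x)) x y (hfS x hx) (h.2 ▸ hfS y hy)
    · rw [if_neg h]; exact zero_le
  -- counting: real inequality N * (N/m - 1) ≤ P
  have key : (N : ℝ) * ((N : ℝ) / (m : ℝ) - 1) ≤ (P : ℝ) := by
    set n : Fin m → ℕ := fun j => (S.filter (fun x => f x = j)).card with hn
    have hNsum : N = ∑ j, n j := by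
      rw [hN, hn]
      exact Finset.card_eq_sum_card_fiberwise fun x _ => Finset.mem_univ (f x)
    have h1 : ∀ x ∈ S, (∑ y ∈ S, if f x = f y then (1:ℝ) else 0) = (n (f x) : ℝ) := by
      intro x hx
      have hcard : (n (f x) : ℕ) = ∑ y ∈ S, if f y = f x then 1 else 0 :=
        Finset.card_filter _ _
      calc (∑ y ∈ S, if f x = f y then (1:ℝ) else 0)
          = ∑ y ∈ S, if f y = f x then (1:ℝ) else 0 :=
            Finset.sum_congr rfl fun y _ => by simp [eq_comm]
        _ = (n (f x) : ℝ) := by rw [hcard]; push_cast; rfl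
    have hQ : (∑ x ∈ S, ∑ y ∈ S, if f x = f y then (1:ℝ) else 0) = ∑ j, (n j : ℝ)^2 := by
      rw [Finset.sum_congr rfl h1,
        ← Finset.sum_fiberwise_of_maps_to (fun x _ => Finset.mem_univ (f x))
          (fun x => (n (f x) : ℝ))]
      refine Finset.sum_congr rfl fun j _ => ?_
      have heq : ∀ x ∈ S.filter (fun x => f x = j), ((n (f x) : ℝ)) = (n j : ℝ) :=
        fun x hx => by rw [(Finset.mem_filter.mp hx).2]
      rw [Finset.sum_congr rfl heq, Finset.sum_const]
      show (n j) • (n j : ℝ) = (n j : ℝ)^2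
      simp [sq, nsmul_eq_mul]
    have hterm : ∀ x ∈ S, (∑ y ∈ S, if x ≠ y ∧ f x = f y then (1:ℝ) else 0)
        = (∑ y ∈ S, if f x = f y then (1:ℝ) else 0) - 1 := by
      intro x hx
      have hself : (∑ y ∈ S, if x = y then (1:ℝ) else 0) = 1 := by
        rw [Finset.sum_ite_eq S x (fun _ => (1:ℝ)), if_pos hx]
      rw [← hself, ← Finset.sum_sub_distrib]
      refine Finset.sum_congr rfl fun y _ => ?_
      by_cases hxy : x = y
      · subst hxy; simp [hx]
      · by_cases hff : f x = f y <;> simp [hxy, hff]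
    have hPQ : (P:ℝ) = (∑ j, (n j:ℝ)^2) - N := by
      have hcast : (P:ℝ) = ∑ x ∈ S, ∑ y ∈ S, if x ≠ y ∧ f x = f y then (1:ℝ) else 0 := by
        rw [hP]; push_cast; rfl
      rw [hcast, Finset.sum_congr rfl hterm, Finset.sum_sub_distrib, Finset.sum_const, hQ]
      simp [hN]
    have hCS : ((N : ℝ))^2 ≤ (m : ℝ) * ∑ j, (n j : ℝ)^2 := by
      have h := sq_sum_le_card_mul_sum_sq (s := (Finset.univ : Finset (Fin m)))
        (f := fun j => (n j : ℝ))
      simpa [hNsum, Nat.cast_sum, Finset.card_univ] using h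
    have hm' : (0:ℝ) < (m:ℝ) := by exact_mod_cast hmpos
    rw [hPQ, mul_sub, mul_one]
    have hdivle : (N:ℝ) * ((N:ℝ) / (m:ℝ)) ≤ ∑ j, (n j : ℝ)^2 := by
      have heq : (N:ℝ) * ((N:ℝ) / (m:ℝ)) = (N:ℝ)^2 / (m:ℝ) := by ring
      rw [heq, div_le_iff₀ hm', mul_comm]
      exact hCS
    linarith
  -- assemble
  calc (N : ℝ≥0∞) * L * ENNReal.ofReal ((N : ℝ) / (m : ℝ) - 1)
      = (N : ℝ≥0∞) * ENNReal.ofReal ((N : ℝ) / (m : ℝ) - 1) * L := by ring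
    _ ≤ (P : ℝ≥0∞) * L := by
        refine mul_le_mul_left ?_ L
        calc (N : ℝ≥0∞) * ENNReal.ofReal ((N : ℝ) / (m : ℝ) - 1)
            = ENNReal.ofReal ((N : ℝ) * ((N : ℝ) / (m : ℝ) - 1)) := by
              rw [ENNReal.ofReal_mul (Nat.cast_nonneg N), ENNReal.ofReal_natCast]
          _ ≤ ENNReal.ofReal (P : ℝ) := ENNReal.ofReal_le_ofReal key
          _ = (P : ℝ≥0∞) := ENNReal.ofReal_natCast P
    _ ≤ xi ℓ S := hxi
end
end

section
/- With $m_\delta$ denoting the minimal number of disjoint $\delta$-hypercubes needed to cover a set, prove that for every bounded Borel set $B\subset\mathbb{R}^d$ with $\mathcal{L}^d(\partial B)=0$ and every $\delta>0$, one has $\lim_{\varepsilon\to 0}\varepsilon^d\, m_\delta(B/\varepsilon)=\delta^{-d}\,\mathcal{L}^d(B)$. -/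
open scoped ENNReal BigOperators Classical Pointwise
open Filter MeasureTheory Set

noncomputable section

variable {d : ℕ}

lemma cube_eq_preimage (c : EuclideanSpace ℝ (Fin d)) (δ : ℝ) :
    cube c δ = (MeasurableEquiv.toLp 2 (Fin d → ℝ)).symm ⁻¹'
      (Set.univ.pi fun i => Ico (c i - δ/2) (c i + δ/2)) := by
  ext x
  simp only [cube, mem_setOf_eq, mem_preimage, Set.mem_univ_pi, mem_Ico,
    MeasurableEquiv.toLp_symm_apply]

lemma closedCube_eq_preimage (c : EuclideanSpace ℝ (Fin d)) (δ : ℝ) :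
    closedCube c δ = (MeasurableEquiv.toLp 2 (Fin d → ℝ)).symm ⁻¹'
      (Set.univ.pi fun i => Icc (c i - δ/2) (c i + δ/2)) := by
  ext x
  simp only [closedCube, mem_setOf_eq, mem_preimage, Set.mem_univ_pi, mem_Icc,
    MeasurableEquiv.toLp_symm_apply]

lemma measurableSet_cube (c : EuclideanSpace ℝ (Fin d)) (δ : ℝ) :
    MeasurableSet (cube c δ) := by
  rw [cube_eq_preimage]
  exact (MeasurableEquiv.toLp 2 (Fin d → ℝ)).symm.measurable
    (MeasurableSet.univ_pi fun i => measurableSet_Ico)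

lemma volume_cube (c : EuclideanSpace ℝ (Fin d)) {δ : ℝ} (hδ : 0 ≤ δ) :
    volume (cube c δ) = ENNReal.ofReal (δ ^ d) := by
  rw [cube_eq_preimage,
    (EuclideanSpace.volume_preserving_symm_measurableEquiv_toLp (Fin d)).measure_preimage
      (MeasurableSet.univ_pi fun i => measurableSet_Ico).nullMeasurableSet,
    volume_pi_pi]
  simp [Real.volume_Ico, show ∀ i:Fin d, c i + δ/2 - (c i - δ/2) = δ by intro i; ring,
    ENNReal.ofReal_pow hδ]

lemma volume_closedCube (c : EuclideanSpace ℝ (Fin d)) {δ : ℝ} (hδ : 0 ≤ δ) :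
    volume (closedCube c δ) = ENNReal.ofReal (δ ^ d) := by
  rw [closedCube_eq_preimage,
    (EuclideanSpace.volume_preserving_symm_measurableEquiv_toLp (Fin d)).measure_preimage
      (MeasurableSet.univ_pi fun i => measurableSet_Icc).nullMeasurableSet,
    volume_pi_pi]
  simp [Real.volume_Icc, show ∀ i:Fin d, c i + δ/2 - (c i - δ/2) = δ by intro i; ring,
    ENNReal.ofReal_pow hδ]


lemma cube_subset_closedCube (c : EuclideanSpace ℝ (Fin d)) (δ : ℝ) :
    cube c δ ⊆ closedCube c δ := fun x hx i => ⟨(hx i).1, (hx i).2.le⟩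

lemma volume_le_of_covers {A : Set (EuclideanSpace ℝ (Fin d))} {n : ℕ} {δ : ℝ}
    (hδ : 0 ≤ δ) (h : Covers δ A n) :
    volume A ≤ (n : ℝ≥0∞) * ENNReal.ofReal (δ^d) := by
  obtain ⟨c, -, hc⟩ := h
  calc volume A ≤ volume (⋃ j, closedCube (c j) δ) := measure_mono hc
  _ ≤ ∑ j : Fin n, volume (closedCube (c j) δ) := measure_iUnion_fintype_le _ _
  _ = (n : ℝ≥0∞) * ENNReal.ofReal (δ^d) := by
      simp [volume_closedCube _ hδ, Finset.sum_const, mul_comm]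

lemma le_volume_of_disjoint {n : ℕ} (c : Fin n → EuclideanSpace ℝ (Fin d)) {δ : ℝ} (hδ : 0 ≤ δ)
    (hdisj : ∀ j k, j ≠ k → Disjoint (cube (c j) δ) (cube (c k) δ))
    {S : Set (EuclideanSpace ℝ (Fin d))} (hS : ∀ j, cube (c j) δ ⊆ S) :
    (n : ℝ≥0∞) * ENNReal.ofReal (δ^d) ≤ volume S := by
  have h1 : volume (⋃ j, cube (c j) δ) = ∑ j : Fin n, volume (cube (c j) δ) := by
    rw [measure_iUnion (fun j k hjk => hdisj j k hjk) (fun j => measurableSet_cube _ _),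
      tsum_fintype]
  have h2 : volume (⋃ j, cube (c j) δ) ≤ volume S := measure_mono (iUnion_subset hS)
  rw [h1] at h2
  simpa [volume_cube _ hδ, Finset.sum_const, mul_comm] using h2

lemma smul_cthickening {c : ℝ} (hc : 0 < c) {r : ℝ} (hr : 0 ≤ r)
    (s : Set (EuclideanSpace ℝ (Fin d))) :
    c • Metric.cthickening r s = Metric.cthickening (c * r) (c • s) := by
  have hc0 : c ≠ 0 := hc.ne'
  ext x
  rw [mem_smul_set_iff_inv_smul_mem₀ hc0, Metric.mem_cthickening_iff,
    Metric.mem_cthickening_iff]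
  have hx : x = c • (c⁻¹ • x) := (smul_inv_smul₀ hc0 x).symm
  rw [show Metric.infEDist x (c • s) = ‖c‖₊ • Metric.infEDist (c⁻¹ • x) s by
      conv_lhs => rw [hx]
      exact infEDist_smul₀ hc0 s _,
    ENNReal.ofReal_mul hc.le, ← Real.enorm_eq_ofReal hc.le, ENNReal.smul_def, smul_eq_mul, enorm_eq_nnnorm]
  rw [ENNReal.mul_le_mul_iff_right (by simp [hc0]) ENNReal.coe_ne_top]

def gridCtr (δ : ℝ) (z : Fin d → ℤ) : EuclideanSpace ℝ (Fin d) := WithLp.toLp 2 (fun i => δ * z i + δ/2)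

lemma mem_gridCube {δ : ℝ} {z : Fin d → ℤ} {x : EuclideanSpace ℝ (Fin d)} :
    x ∈ cube (gridCtr δ z) δ ↔ ∀ i, δ * z i ≤ x i ∧ x i < δ * z i + δ := by
  constructor <;> intro h i <;> have h1 := (h i).1 <;> have h2 := (h i).2 <;>
    constructor <;> [skip; skip; skip; skip] <;>
    simp only [gridCtr, PiLp.toLp_apply] at * <;> linarith

lemma grid_disjoint {δ : ℝ} (hδ : 0 < δ) {z w : Fin d → ℤ} (hzw : z ≠ w) :
    Disjoint (cube (gridCtr δ z) δ) (cube (gridCtr δ w) δ) := by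
  rw [Set.disjoint_left]
  intro x hx hx'
  rw [mem_gridCube] at hx hx'
  obtain ⟨i, hi⟩ := Function.ne_iff.mp hzw
  have key : ∀ a b : ℤ, a < b → δ * a + δ ≤ δ * b := by
    intro a b hab
    have : (a : ℝ) + 1 ≤ b := by exact_mod_cast Int.add_one_le_iff.mpr hab
    nlinarith
  rcases lt_or_gt_of_ne hi with h | h
  · linarith [(hx i).2, (hx' i).1, key _ _ h]
  · linarith [(hx' i).2, (hx i).1, key _ _ h]

lemma mem_grid_floor {δ : ℝ} (hδ : 0 < δ) (x : EuclideanSpace ℝ (Fin d)) :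
    x ∈ cube (gridCtr δ (fun i => ⌊x i / δ⌋)) δ := by
  rw [mem_gridCube]
  intro i
  have h1 : (⌊x i / δ⌋ : ℝ) ≤ x i / δ := Int.floor_le _
  have h2 : x i / δ < ⌊x i / δ⌋ + 1 := Int.lt_floor_add_one _
  constructor
  · calc δ * ⌊x i / δ⌋ ≤ δ * (x i / δ) := by nlinarith
    _ = x i := by field_simp
  · have : x i = δ * (x i / δ) := by field_simp
    nlinarith

lemma coord_abs_le_norm (x : EuclideanSpace ℝ (Fin d)) (i : Fin d) : |x i| ≤ ‖x‖ := by
  rw [EuclideanSpace.norm_eq]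
  rw [show |x i| = Real.sqrt (|x i|^2) by rw [Real.sqrt_sq_eq_abs, abs_abs]]
  apply Real.sqrt_le_sqrt
  exact Finset.single_le_sum (f := fun j => |x j|^2) (fun j _ => sq_nonneg _)
    (Finset.mem_univ i)

lemma exists_grid_cover {A : Set (EuclideanSpace ℝ (Fin d))} (hA : Bornology.IsBounded A)
    {δ : ℝ} (hδ : 0 < δ) :
    ∃ n : ℕ, Covers δ A n ∧
      (n : ℝ≥0∞) * ENNReal.ofReal (δ^d) ≤
        volume (Metric.cthickening (δ * Real.sqrt d) A) := by
  obtain ⟨R, hR⟩ := hA.subset_closedBall 0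
  set T : Set (Fin d → ℤ) := {z | (cube (gridCtr δ z) δ ∩ A).Nonempty} with hT
  have hTfin : T.Finite := by
    set M : ℝ := (|R| + δ) / δ with hM
    apply Set.Finite.subset (Set.Finite.pi (fun i : Fin d => Set.finite_Icc (-⌈M⌉) ⌈M⌉))
    intro z hz
    obtain ⟨x, hx, hxA⟩ := hz
    rw [mem_gridCube] at hx
    intro i _
    have hb : |x i| ≤ |R| := by
      have := hR hxA
      rw [Metric.mem_closedBall, dist_zero_right] at this
      exact (coord_abs_le_norm x i).trans (this.trans (le_abs_self R))
    have h1 : δ * z i ≤ |R| := le_trans (hx i).1 ((le_abs_self _).trans (abs_abs (x i) ▸ hb))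
    have h2 : -(|R| + δ) ≤ δ * z i := by
      have := (hx i).2
      have := neg_abs_le (x i)
      linarith
    have hzi : |(z i : ℝ)| ≤ M := by
      rw [abs_le]
      rw [hM]
      constructor
      · rw [neg_le, le_div_iff₀ hδ]; nlinarith
      · rw [le_div_iff₀ hδ]; nlinarith
    rw [abs_le] at hzi
    constructor
    · have : (-⌈M⌉ : ℝ) ≤ z i := le_trans (by simpa using neg_le_neg (Int.le_ceil M)) hzi.1
      exact_mod_cast this
    · exact_mod_cast hzi.2.trans (Int.le_ceil M)
  set n := hTfin.toFinset.card with hn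
  have e := hTfin.toFinset.equivFin
  refine ⟨n, ⟨fun j => gridCtr δ ((e.symm j) : Fin d → ℤ), ?_, ?_⟩, ?_⟩
  · intro j k hjk
    apply grid_disjoint hδ
    intro hzz
    exact hjk (by
      have : e.symm j = e.symm k := Subtype.ext hzz
      exact e.symm.injective this)
  · intro x hx
    have hz : (fun i => ⌊x i / δ⌋) ∈ T := ⟨x, mem_grid_floor hδ x, hx⟩
    have hz' : (fun i => ⌊x i / δ⌋) ∈ hTfin.toFinset := hTfin.mem_toFinset.mpr hz
    refine mem_iUnion.mpr ⟨e ⟨_, hz'⟩, ?_⟩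
    simp only [Equiv.symm_apply_apply]
    exact cube_subset_closedCube _ _ (mem_grid_floor hδ x)
  · apply le_volume_of_disjoint _ hδ.le
    · intro j k hjk
      apply grid_disjoint hδ
      intro hzz
      exact hjk (e.symm.injective (Subtype.ext hzz))
    · intro j y hy
      obtain ⟨a, ha, haA⟩ := hTfin.mem_toFinset.mp (e.symm j).2
      apply Metric.mem_cthickening_of_dist_le y a _ _ haA
      rw [mem_gridCube] at hy ha
      rw [EuclideanSpace.dist_eq]
      have hsum : ∑ i, dist (y i) (a i) ^ 2 ≤ (d : ℝ) * δ^2 := by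
        calc ∑ i, dist (y i) (a i) ^ 2 ≤ ∑ _i : Fin d, δ^2 := by
              apply Finset.sum_le_sum
              intro i _
              have h1 := hy i; have h2 := ha i
              rw [Real.dist_eq, sq_abs]
              nlinarith [h1.1, h1.2, h2.1, h2.2]
        _ = (d : ℝ) * δ^2 := by simp [Finset.sum_const, mul_comm]
      calc Real.sqrt (∑ i, dist (y i) (a i) ^ 2) ≤ Real.sqrt ((d : ℝ) * δ^2) :=
            Real.sqrt_le_sqrt hsum
      _ = δ * Real.sqrt d := by
            rw [Real.sqrt_mul (Nat.cast_nonneg d), Real.sqrt_sq hδ.le, mul_comm]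

/-- For every bounded Borel set `B` with negligible boundary and every `δ > 0`,
`ε^d m_δ(B/ε) → δ^{-d} 𝓛^d(B)` as `ε → 0⁺`. -/
theorem mDelta_scaling_limit {d : ℕ} (B : Set (EuclideanSpace ℝ (Fin d)))
    (hBbd : Bornology.IsBounded B) (hBmeas : MeasurableSet B)
    (hBfr : volume (frontier B) = 0) (δ : ℝ) (hδ : 0 < δ) :
    Tendsto (fun ε : ℝ => ε ^ d * (mDelta δ (ε⁻¹ • B) : ℝ))
      (nhdsWithin 0 (Set.Ioi 0)) (nhds ((volume B).toReal / δ ^ d)) := by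
  have hδd : (0:ℝ) < δ ^ d := pow_pos hδ d
  have hBfin : volume B ≠ ⊤ := hBbd.measure_lt_top.ne
  have hclos : volume (closure B) = volume B := by
    refine le_antisymm ?_ (measure_mono subset_closure)
    calc volume (closure B) ≤ volume (B ∪ frontier B) := by
          apply measure_mono
          intro x hx
          by_cases hxB : x ∈ B
          · exact Or.inl hxB
          · exact Or.inr ⟨hx, fun h => hxB (interior_subset h)⟩
    _ ≤ volume B + volume (frontier B) := measure_union_le _ _
    _ = volume B := by rw [hBfr, add_zero]
  set W : ℝ → ℝ≥0∞ := fun ε => volume (Metric.cthickening (ε * (δ * Real.sqrt d)) B) with hWdef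
  have hWfin : ∀ ε : ℝ, W ε ≠ ⊤ := fun ε =>
    (Bornology.IsBounded.cthickening hBbd).measure_lt_top.ne
  -- upper function tends to the limit
  have t1 : Tendsto (fun r => volume (Metric.cthickening r B)) (nhds 0) (nhds (volume B)) := by
    rw [← hclos]
    exact tendsto_measure_cthickening
      ⟨1, one_pos, (Bornology.IsBounded.cthickening hBbd).measure_lt_top.ne⟩
  have t2 : Tendsto (fun ε : ℝ => ε * (δ * Real.sqrt d)) (nhds 0) (nhds 0) := by
    have : Tendsto (fun ε : ℝ => ε * (δ * Real.sqrt d)) (nhds 0)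
        (nhds (0 * (δ * Real.sqrt d))) := Filter.Tendsto.mul_const _ tendsto_id
    simpa using this
  have t3 : Tendsto (fun ε => (W ε).toReal) (nhds 0) (nhds (volume B).toReal) :=
    (ENNReal.tendsto_toReal hBfin).comp (t1.comp t2)
  have t4 : Tendsto (fun ε => (W ε).toReal / δ ^ d) (nhdsWithin 0 (Set.Ioi 0))
      (nhds ((volume B).toReal / δ ^ d)) :=
    (t3.mono_left nhdsWithin_le_nhds).div_const _
  refine tendsto_of_tendsto_of_tendsto_of_le_of_le' tendsto_const_nhds t4 ?_ ?_
  · -- lower bound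
    filter_upwards [self_mem_nhdsWithin] with ε hε
    have hε : (0:ℝ) < ε := hε
    set A := ε⁻¹ • B with hA
    obtain ⟨N, hcov, -⟩ := exists_grid_cover (hBbd.smul₀ ε⁻¹) hδ
    have hne : {n | Covers δ A n}.Nonempty := ⟨N, hcov⟩
    have hm : Covers δ A (mDelta δ A) := Nat.sInf_mem hne
    have hvolA : volume A = ENNReal.ofReal (ε⁻¹ ^ d) * volume B := by
      rw [hA, Measure.addHaar_smul, finrank_euclideanSpace_fin,
        abs_of_nonneg (by positivity)]
    have hle := volume_le_of_covers hδ.le hm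
    rw [hvolA] at hle
    have hfin2 : ((mDelta δ A : ℝ≥0∞) * ENNReal.ofReal (δ^d)) ≠ ⊤ :=
      ENNReal.mul_ne_top (by simp) ENNReal.ofReal_ne_top
    have hR := (ENNReal.toReal_le_toReal (ne_top_of_le_ne_top hfin2 hle) hfin2).mpr hle
    simp only [ENNReal.toReal_mul, ENNReal.toReal_ofReal hδd.le,
      ENNReal.toReal_ofReal (show (0:ℝ) ≤ ε⁻¹ ^ d by positivity), ENNReal.toReal_natCast] at hR
    have hεd : (0:ℝ) < ε ^ d := pow_pos hε d
    have hinv : ε⁻¹ ^ d * ε ^ d = 1 := by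
      rw [← mul_pow, inv_mul_cancel₀ hε.ne', one_pow]
    have hV : (volume B).toReal = ε ^ d * (ε⁻¹ ^ d * (volume B).toReal) := by
      rw [← mul_assoc, mul_comm (ε ^ d), hinv, one_mul]
    rw [div_le_iff₀ hδd, hV, mul_assoc]
    exact mul_le_mul_of_nonneg_left hR hεd.le
  · -- upper bound
    filter_upwards [self_mem_nhdsWithin] with ε hε
    have hε : (0:ℝ) < ε := hε
    set A := ε⁻¹ • B with hA
    obtain ⟨N, hcov, hNle⟩ := exists_grid_cover (hBbd.smul₀ ε⁻¹) hδ
    have hmN : mDelta δ A ≤ N := Nat.sInf_le hcov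
    have hthick : Metric.cthickening (δ * Real.sqrt d) A =
        ε⁻¹ • Metric.cthickening (ε * (δ * Real.sqrt d)) B := by
      rw [smul_cthickening (inv_pos.mpr hε) (by positivity) B, hA]
      congr 1
      field_simp
    have hvol : volume (Metric.cthickening (δ * Real.sqrt d) A)
        = ENNReal.ofReal (ε⁻¹ ^ d) * W ε := by
      rw [hthick, Measure.addHaar_smul, finrank_euclideanSpace_fin,
        abs_of_nonneg (by positivity)]
    have hle : (mDelta δ A : ℝ≥0∞) * ENNReal.ofReal (δ^d) ≤ ENNReal.ofReal (ε⁻¹ ^ d) * W ε := by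
      rw [← hvol]
      refine le_trans ?_ hNle
      exact mul_le_mul_left (by exact_mod_cast Nat.cast_le.mpr hmN) _
    have hfinR : ENNReal.ofReal (ε⁻¹ ^ d) * W ε ≠ ⊤ :=
      ENNReal.mul_ne_top ENNReal.ofReal_ne_top (hWfin ε)
    have hR := (ENNReal.toReal_le_toReal (ne_top_of_le_ne_top hfinR hle) hfinR).mpr hle
    simp only [ENNReal.toReal_mul, ENNReal.toReal_ofReal hδd.le,
      ENNReal.toReal_ofReal (show (0:ℝ) ≤ ε⁻¹ ^ d by positivity), ENNReal.toReal_natCast] at hR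
    have hεd : (0:ℝ) < ε ^ d := pow_pos hε d
    have hinv : ε ^ d * ε⁻¹ ^ d = 1 := by
      rw [← mul_pow, mul_inv_cancel₀ hε.ne', one_pow]
    rw [le_div_iff₀ hδd, mul_assoc]
    calc ε ^ d * ((mDelta δ A : ℝ) * δ ^ d)
        ≤ ε ^ d * (ε⁻¹ ^ d * (W ε).toReal) := mul_le_mul_of_nonneg_left hR hεd.le
      _ = (W ε).toReal := by rw [← mul_assoc, hinv, one_mul]
end
end

section
/- For $\lambda\in\mathbb{R}$ and a Borel set $B\subset\mathbb{R}^d$ with $\mathcal{L}^d(B)<\infty$, define $\Gamma_\ell(\lambda,B)=\sup\{\lambda\,\#S-\xi_\ell(S):S\subset B\text{ finite}\}$. Then $\lambda\mapsto\Gamma_\ell(\lambda,B)$ is convex, nonnegative, vanishes for $\lambda\le 0$, and for any $\delta>0$ with $\ell_-(\delta)\in(0,+\infty]$ satisfies $\Gamma_\ell(\lambda,B)\le m_\delta(B)\,\ell_-(\delta)\,\varphi\big(\lambda/\ell_-(\delta)\big)$, where $\varphi(t)=(1+t)^2/4$ for $t\ge1$, $\varphi(t)=t$ for $0\le t<1$,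 $\varphi(t)=0$ for $t<0$ (with the convention that the bound reads $\Gamma_\ell(\lambda,B)\le \lambda\,m_\delta(B)$ when $\ell_-(\delta)=+\infty$). -/
open scoped ENNReal BigOperators Classical
open Filter MeasureTheory Set

noncomputable section

/-- `Γ_ℓ(λ, B) = sup {λ #S - ξ_ℓ(S) : S ⊆ B finite}` (supremum over configurations of
finite energy, as a real number). -/
def Gam {d : ℕ} (ℓ : ℝ → ℝ≥0∞) (lam : ℝ) (B : Set (EuclideanSpace ℝ (Fin d))) : ℝ :=
  sSup {x : ℝ | ∃ S : Finset (EuclideanSpace ℝ (Fin d)),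
    ↑S ⊆ B ∧ xi ℓ S ≠ ⊤ ∧ x = lam * S.card - (xi ℓ S).toReal}

/-- `φ(t) = (1+t)²/4` for `t ≥ 1`, `t` for `0 ≤ t < 1`, `0` for `t < 0`. -/
def phi (t : ℝ) : ℝ := if t < 0 then 0 else if t < 1 then t else (1 + t) ^ 2 / 4

lemma phi_nonneg (t : ℝ) : 0 ≤ phi t := by
  unfold phi; split_ifs with h1 h2
  · exact le_rfl
  · exact not_lt.1 h1
  · positivity

lemma key_ineq (e lam : ℝ) (he : 0 < e) (k : ℕ) :
    lam * k - e * ((k * (k - 1) : ℕ) : ℝ) ≤ e * phi (lam / e) := by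
  have hphi := phi_nonneg (lam / e)
  cases k with
  | zero => simpa using mul_nonneg he.le hphi
  | succ m =>
    have hm : (0:ℝ) ≤ m := Nat.cast_nonneg m
    simp only [Nat.add_sub_cancel]
    push_cast
    unfold phi
    split_ifs with h1 h2
    · have hlam : lam < 0 := by
        rcases div_neg_iff.1 h1 with ⟨h, _⟩ | ⟨_, h⟩ <;> nlinarith
      nlinarith [mul_nonneg (mul_nonneg he.le (by linarith : (0:ℝ) ≤ (m:ℝ)+1)) hm,
        mul_nonpos_of_nonpos_of_nonneg hlam.le (by linarith : (0:ℝ) ≤ (m:ℝ)+1)]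
    · have h0 : 0 ≤ lam := not_lt.1 fun h => h1 (div_neg_of_neg_of_pos h he)
      have hlt : lam < e := (div_lt_one he).1 h2
      have heq : e * (lam / e) = lam := by field_simp
      rw [heq]
      nlinarith [mul_nonneg hm (sub_nonneg.2 hlt.le), mul_nonneg (mul_nonneg he.le hm) hm]
    · have hge : e ≤ lam := by
        have := (one_le_div he).1 (not_lt.1 h2)
        linarith
      have heq : e * ((1 + lam / e) ^ 2 / 4) = (e + lam) ^ 2 / (4 * e) := by
        field_simp
      rw [heq, le_div_iff₀ (by positivity : (0:ℝ) < 4 * e)]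
      nlinarith [sq_nonneg (e + lam - 2 * e * ((m:ℝ) + 1))]

lemma ellMinus_le_pair {d : ℕ} (ℓ : ℝ → ℝ≥0∞) (δ : ℝ) (c₀ x y : EuclideanSpace ℝ (Fin d))
    (hx : x ∈ closedCube c₀ δ) (hy : y ∈ closedCube c₀ δ) :
    ellMinus d ℓ δ ≤ ℓ (dist x y) := by
  classical
  set w : EuclideanSpace ℝ (Fin d) := WithLp.toLp 2 (fun i => c₀ i - δ/2) with hw
  have hx' : (x - w) ∈ {z : EuclideanSpace ℝ (Fin d) | ∀ i, z i ∈ Set.Icc 0 δ} := by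
    intro i
    have h := hx i
    have : (x - w) i = x i - (c₀ i - δ/2) := by simp [hw]
    rw [this]
    constructor <;> simp <;> linarith [h.1, h.2]
  have hy' : (y - w) ∈ {z : EuclideanSpace ℝ (Fin d) | ∀ i, z i ∈ Set.Icc 0 δ} := by
    intro i
    have h := hy i
    have : (y - w) i = y i - (c₀ i - δ/2) := by simp [hw]
    rw [this]
    constructor <;> simp <;> linarith [h.1, h.2]
  have hdist : dist (x - w) (y - w) = dist x y := dist_sub_right x y w
  calc ellMinus d ℓ δ ≤ ℓ (dist (x - w) (y - w)) := by
        unfold ellMinus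
        exact iInf_le_of_le (x - w) (iInf_le_of_le hx' (iInf_le_of_le (y - w) (iInf_le_of_le hy' le_rfl)))
    _ = ℓ (dist x y) := by rw [hdist]

lemma partition_bound {d : ℕ} (ℓ : ℝ → ℝ≥0∞) (δ : ℝ) {n : ℕ}
    (c : Fin n → EuclideanSpace ℝ (Fin d)) (S : Finset (EuclideanSpace ℝ (Fin d)))
    (hSsub : ∀ x ∈ S, ∃ j, x ∈ closedCube (c j) δ) :
    ∃ k : Fin n → ℕ, S.card = ∑ j, k j ∧
      ∑ j, ((k j * (k j - 1) : ℕ) : ℝ≥0∞) * ellMinus d ℓ δ ≤ xi ℓ S := by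
  classical
  rcases Nat.eq_zero_or_pos n with hn | hn
  · subst hn
    have hSe : S = ∅ := by
      rcases S.eq_empty_or_nonempty with h | ⟨x, hx⟩
      · exact h
      · exact absurd (hSsub x hx) (by simp)
    refine ⟨fun j => 0, ?_, ?_⟩ <;> simp [hSe, xi]
  · have : Inhabited (Fin n) := ⟨⟨0, hn⟩⟩
    set g : EuclideanSpace ℝ (Fin d) → Fin n :=
      fun x => if h : ∃ j, x ∈ closedCube (c j) δ then h.choose else default with hg
    have hgmem : ∀ x ∈ S, x ∈ closedCube (c (g x)) δ := by
      intro x hx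
      have h := hSsub x hx
      simp only [hg, dif_pos h]
      exact h.choose_spec
    set k : Fin n → ℕ := fun j => (S.filter (fun x => g x = j)).card with hk
    refine ⟨k, ?_, ?_⟩
    · exact Finset.card_eq_sum_card_fiberwise (fun x _ => Finset.mem_univ (g x))
    · set a := ellMinus d ℓ δ
      have hfib : ∑ j : Fin n, ∑ x ∈ S.filter (fun x => g x = j),
          (∑ y ∈ S, if x ≠ y then ℓ (dist x y) else 0) = xi ℓ S :=
        Finset.sum_fiberwise_of_maps_to (fun x _ => Finset.mem_univ (g x)) _
      rw [xi] at hfib ⊢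
      rw [← hfib]
      refine Finset.sum_le_sum fun j _ => ?_
      set T := S.filter (fun x => g x = j) with hT
      have hTc : ∀ x ∈ T, x ∈ closedCube (c j) δ := by
        intro x hx
        rw [hT, Finset.mem_filter] at hx
        have := hgmem x hx.1
        rwa [hx.2] at this
      have step1 : ∀ x ∈ T, ((k j - 1 : ℕ) : ℝ≥0∞) * a
          ≤ ∑ y ∈ S, if x ≠ y then ℓ (dist x y) else 0 := by
        intro x hx
        have hsub : ∑ y ∈ T, (if x ≠ y then ℓ (dist x y) else 0)
            ≤ ∑ y ∈ S, if x ≠ y then ℓ (dist x y) else 0 :=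
          Finset.sum_le_sum_of_subset (Finset.filter_subset _ _)
        refine le_trans ?_ hsub
        have h1 : ∑ y ∈ T.erase x, (if x ≠ y then ℓ (dist x y) else 0)
            = ∑ y ∈ T, (if x ≠ y then ℓ (dist x y) else 0) :=
          Finset.sum_erase _ (by simp)
        rw [← h1]
        have h2 : ((k j - 1 : ℕ) : ℝ≥0∞) * a = ∑ y ∈ T.erase x, a := by
          rw [Finset.sum_const, Finset.card_erase_of_mem hx, nsmul_eq_mul, hk]
        rw [h2]
        refine Finset.sum_le_sum fun y hy => ?_
        have hxy : x ≠ y := fun h => (Finset.mem_erase.1 hy).1 h.symm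
        rw [if_pos hxy]
        exact ellMinus_le_pair ℓ δ (c j) x y (hTc x hx) (hTc y (Finset.mem_of_mem_erase hy))
      calc ((k j * (k j - 1) : ℕ) : ℝ≥0∞) * a
          = ∑ _x ∈ T, ((k j - 1 : ℕ) : ℝ≥0∞) * a := by
            rw [Finset.sum_const, nsmul_eq_mul, hk]
            push_cast
            ring
        _ ≤ ∑ x ∈ T, ∑ y ∈ S, if x ≠ y then ℓ (dist x y) else 0 :=
            Finset.sum_le_sum step1

/-- For `B` Borel of finite measure (coverable by finitely many `δ`-hypercubes),
`λ ↦ Γ_ℓ(λ, B)` is convex, nonnegative, vanishes on `λ ≤ 0` and satisfies the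
upper bound `Γ_ℓ(λ, B) ≤ m_δ(B) ℓ₋(δ) φ(λ/ℓ₋(δ))`, the bound reading
`Γ_ℓ(λ, B) ≤ λ m_δ(B)` when `ℓ₋(δ) = +∞`. -/
theorem Gam_convex_and_bound {d : ℕ} (ℓ : ℝ → ℝ≥0∞)
    (B : Set (EuclideanSpace ℝ (Fin d))) (hBmeas : MeasurableSet B)
    (hBvol : volume B ≠ ⊤) (δ : ℝ) (hδ : 0 < δ)
    (hpos : 0 < ellMinus d ℓ δ) (hcov : ∃ n, Covers δ B n) :
    ConvexOn ℝ Set.univ (fun lam => Gam ℓ lam B) ∧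
    (∀ lam : ℝ, 0 ≤ Gam ℓ lam B) ∧
    (∀ lam : ℝ, lam ≤ 0 → Gam ℓ lam B = 0) ∧
    (∀ lam : ℝ,
      (ellMinus d ℓ δ ≠ ⊤ →
        Gam ℓ lam B ≤ (mDelta δ B : ℝ) * (ellMinus d ℓ δ).toReal *
          phi (lam / (ellMinus d ℓ δ).toReal)) ∧
      (ellMinus d ℓ δ = ⊤ → 0 ≤ lam → Gam ℓ lam B ≤ lam * (mDelta δ B : ℝ))) := by
  classical
  set a := ellMinus d ℓ δ with ha
  set n := mDelta δ B with hnd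
  have hCov : Covers δ B n := Nat.sInf_mem hcov
  obtain ⟨c, hdisj, hsub⟩ := hCov
  -- the defining set of Gam
  set GSet : ℝ → Set ℝ := fun lam => {x : ℝ | ∃ S : Finset (EuclideanSpace ℝ (Fin d)),
    ↑S ⊆ B ∧ xi ℓ S ≠ ⊤ ∧ x = lam * S.card - (xi ℓ S).toReal} with hGSet
  have hGam : ∀ lam, Gam ℓ lam B = sSup (GSet lam) := fun _ => rfl
  have h0mem : ∀ lam, (0:ℝ) ∈ GSet lam := by
    intro lam
    refine ⟨∅, by simp, by simp [xi], by simp [xi]⟩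
  -- elementwise structure: partition facts for any admissible S
  have hpart : ∀ S : Finset (EuclideanSpace ℝ (Fin d)), ↑S ⊆ B →
      ∃ k : Fin n → ℕ, S.card = ∑ j, k j ∧
        ∑ j, ((k j * (k j - 1) : ℕ) : ℝ≥0∞) * a ≤ xi ℓ S := by
    intro S hSB
    refine partition_bound ℓ δ c S fun x hx => ?_
    have := hsub (hSB hx)
    simpa using this
  -- finite case elementwise bound
  have hfin : ∀ lam : ℝ, a ≠ ⊤ → ∀ x ∈ GSet lam,
      x ≤ (n : ℝ) * a.toReal * phi (lam / a.toReal) := by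
    intro lam hane x hx
    obtain ⟨S, hSB, hSf, rfl⟩ := hx
    obtain ⟨k, hcard, hE⟩ := hpart S hSB
    set e := a.toReal with he
    have hepos : 0 < e := ENNReal.toReal_pos hpos.ne' hane
    have hEr : ∑ j, ((k j * (k j - 1) : ℕ) : ℝ) * e ≤ (xi ℓ S).toReal := by
      have h := ENNReal.toReal_mono hSf hE
      rw [ENNReal.toReal_sum (fun j _ => ENNReal.mul_ne_top (ENNReal.natCast_ne_top _) hane)] at h
      simp only [ENNReal.toReal_mul, ENNReal.toReal_natCast] at h
      exact h
    have hcardR : (S.card : ℝ) = ∑ j, (k j : ℝ) := by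
      rw [hcard]; push_cast; ring
    calc lam * S.card - (xi ℓ S).toReal
        ≤ lam * (∑ j, (k j : ℝ)) - ∑ j, ((k j * (k j - 1) : ℕ) : ℝ) * e := by
          rw [hcardR]; linarith
      _ = ∑ j, (lam * (k j : ℝ) - e * ((k j * (k j - 1) : ℕ) : ℝ)) := by
          rw [Finset.sum_sub_distrib, Finset.mul_sum]
          congr 1
          exact Finset.sum_congr rfl fun j _ => by ring
      _ ≤ ∑ _j : Fin n, e * phi (lam / e) :=
          Finset.sum_le_sum fun j _ => key_ineq e lam hepos (k j)
      _ = (n : ℝ) * e * phi (lam / e) := by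
          rw [Finset.sum_const, Finset.card_univ, Fintype.card_fin, nsmul_eq_mul, mul_assoc]
  -- top case elementwise bound
  have htop : ∀ lam : ℝ, a = ⊤ → ∀ x ∈ GSet lam, x ≤ max lam 0 * n := by
    intro lam hatop x hx
    obtain ⟨S, hSB, hSf, rfl⟩ := hx
    obtain ⟨k, hcard, hE⟩ := hpart S hSB
    have hk1 : ∀ j, k j ≤ 1 := by
      intro j
      by_contra h
      have h2 : 2 ≤ k j := by omega
      have hne : ((k j * (k j - 1) : ℕ) : ℝ≥0∞) ≠ 0 := by
        refine Nat.cast_ne_zero.mpr ?_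
        have h3 : 1 ≤ k j - 1 := by omega
        have := Nat.mul_le_mul h2 h3
        omega
      have hterm : ((k j * (k j - 1) : ℕ) : ℝ≥0∞) * a = ⊤ := by
        rw [hatop, ENNReal.mul_top hne]
      have hle : ((k j * (k j - 1) : ℕ) : ℝ≥0∞) * a
          ≤ ∑ j', ((k j' * (k j' - 1) : ℕ) : ℝ≥0∞) * a :=
        Finset.single_le_sum (f := fun j' => ((k j' * (k j' - 1) : ℕ) : ℝ≥0∞) * a)
          (fun _ _ => zero_le) (Finset.mem_univ j)
      exact hSf (top_le_iff.1 ((hterm ▸ hle).trans hE))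
    have hcardn : S.card ≤ n := by
      rw [hcard]
      calc ∑ j, k j ≤ ∑ _j : Fin n, 1 := Finset.sum_le_sum fun j _ => hk1 j
        _ = n := by simp
    have h1 : lam * S.card ≤ max lam 0 * n := by
      calc lam * S.card ≤ max lam 0 * S.card :=
            mul_le_mul_of_nonneg_right (le_max_left _ _) (Nat.cast_nonneg _)
        _ ≤ max lam 0 * n :=
            mul_le_mul_of_nonneg_left (Nat.cast_le.2 hcardn) (le_max_right _ _)
    have := ENNReal.toReal_nonneg (a := xi ℓ S)
    linarith
  -- boundedness
  have hbdd : ∀ lam, BddAbove (GSet lam) := by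
    intro lam
    rcases eq_or_ne a ⊤ with h | h
    · exact ⟨max lam 0 * n, fun x hx => htop lam h x hx⟩
    · exact ⟨(n : ℝ) * a.toReal * phi (lam / a.toReal), fun x hx => hfin lam h x hx⟩
  have hnonneg : ∀ lam, 0 ≤ Gam ℓ lam B := by
    intro lam
    rw [hGam]
    exact le_csSup (hbdd lam) (h0mem lam)
  refine ⟨?_, hnonneg, ?_, ?_⟩
  · refine ⟨convex_univ, ?_⟩
    intro p _ q _ α β hα hβ hαβ
    simp only [smul_eq_mul]
    rw [hGam]
    refine Real.sSup_le ?_ ?_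
    · rintro x ⟨S, hSB, hSf, rfl⟩
      have h1 : p * S.card - (xi ℓ S).toReal ≤ Gam ℓ p B := by
        rw [hGam]; exact le_csSup (hbdd p) ⟨S, hSB, hSf, rfl⟩
      have h2 : q * S.card - (xi ℓ S).toReal ≤ Gam ℓ q B := by
        rw [hGam]; exact le_csSup (hbdd q) ⟨S, hSB, hSf, rfl⟩
      have key : (α * p + β * q) * S.card - (xi ℓ S).toReal
          = α * (p * S.card - (xi ℓ S).toReal) + β * (q * S.card - (xi ℓ S).toReal) := by
        linear_combination (xi ℓ S).toReal * hαβ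
      rw [key]
      exact add_le_add (mul_le_mul_of_nonneg_left h1 hα) (mul_le_mul_of_nonneg_left h2 hβ)
    · exact add_nonneg (mul_nonneg hα (hnonneg p)) (mul_nonneg hβ (hnonneg q))
  · intro lam hlam
    refine le_antisymm ?_ (hnonneg lam)
    rw [hGam]
    refine Real.sSup_le ?_ le_rfl
    rintro x ⟨S, hSB, hSf, rfl⟩
    have h1 : lam * S.card ≤ 0 := mul_nonpos_of_nonpos_of_nonneg hlam (Nat.cast_nonneg _)
    have := ENNReal.toReal_nonneg (a := xi ℓ S)
    linarith
  · intro lam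
    constructor
    · intro hane
      rw [hGam]
      refine Real.sSup_le (fun x hx => hfin lam hane x hx) ?_
      have := ENNReal.toReal_nonneg (a := a)
      have := phi_nonneg (lam / a.toReal)
      positivity
    · intro hatop hlam
      rw [hGam]
      refine Real.sSup_le ?_ (by positivity)
      intro x hx
      have := htop lam hatop x hx
      rwa [max_eq_left hlam] at this
end
end
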